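/- Let Ω ⊂ ℝ^N (N ≥ 2) be a bounded open set, let A satisfy (Abounded), let f ∈ L¹(Ω) be nonnegative, and let h : [0,∞) → [0,∞] be continuous and finite on (0,∞). Let u ∈ H¹₀(Ω) be nonnegative with h(u) f ∈ L¹_loc(Ω) and ∫_Ω A(x)∇u·∇φ dx = ∫_Ω h(u) f φ dx for every φ ∈ C¹_c(Ω). Then for every v ∈ H¹₀(Ω) the function h(u) f v belongs to L¹(Ω) and ∫_Ω A(x)∇u·∇v dx = ∫_Ω h(u) f v dx. -/

import Mathlib

open MeasureTheory Filter Topology Set Metric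
open scoped ENNReal NNReal BigOperators

noncomputable section

/-- Euclidean space `ℝ^N`. -/
abbrev Euc (N : ℕ) : Type := EuclideanSpace ℝ (Fin N)

/-- Smooth compactly supported test functions on `Ω` (the class `C_c^∞(Ω)`). -/
def IsTest {N : ℕ} (Ω : Set (Euc N)) (φ : Euc N → ℝ) : Prop :=
  ContDiff ℝ (⊤ : ℕ∞) φ ∧ HasCompactSupport φ ∧ tsupport φ ⊆ Ω

/-- `C¹` compactly supported test functions on `Ω` (the class `C¹_c(Ω)`). -/
def IsTestC1 {N : ℕ} (Ω : Set (Euc N)) (φ : Euc N → ℝ) : Prop :=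
  ContDiff ℝ 1 φ ∧ HasCompactSupport φ ∧ tsupport φ ⊆ Ω

/-- `g` is a weak gradient of `u` on `Ω` (in particular `u, g ∈ L¹_loc(Ω)`). -/
def HasWeakGradOn {N : ℕ} (u : Euc N → ℝ) (g : Euc N → Euc N) (Ω : Set (Euc N)) : Prop :=
  MeasureTheory.LocallyIntegrableOn u Ω volume ∧
  MeasureTheory.LocallyIntegrableOn g Ω volume ∧
    ∀ φ : Euc N → ℝ, IsTest Ω φ → ∀ i : Fin N,
      ∫ x in Ω, u x * gradient φ x i = - ∫ x in Ω, g x i * φ x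

/-- Membership in `W^{1,p}_0(Ω)` with distinguished gradient `g` : `u` lies in the closure of
the smooth compactly supported functions in the `W^{1,p}(Ω)`-norm. -/
def MemW1p0 {N : ℕ} (p : ℝ≥0∞) (Ω : Set (Euc N)) (u : Euc N → ℝ) (g : Euc N → Euc N) : Prop :=
  MemLp u p (volume.restrict Ω) ∧ MemLp g p (volume.restrict Ω) ∧
    ∃ φ : ℕ → Euc N → ℝ, (∀ n, IsTest Ω (φ n)) ∧
      Tendsto (fun n => eLpNorm (fun x => φ n x - u x) p (volume.restrict Ω)) atTop (𝓝 0) ∧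
      Tendsto (fun n => eLpNorm (fun x => gradient (φ n) x - g x) p (volume.restrict Ω))
        atTop (𝓝 0)

/-- Membership in `W^{1,p}_loc(Ω)` with distinguished weak gradient `g`. -/
def MemW1pLoc {N : ℕ} (p : ℝ≥0∞) (Ω : Set (Euc N)) (u : Euc N → ℝ) (g : Euc N → Euc N) : Prop :=
  HasWeakGradOn u g Ω ∧
  ∀ K ⊆ Ω, IsCompact K → MemLp u p (volume.restrict K) ∧ MemLp g p (volume.restrict K)

/-- `(M v) · w` for a matrix `M` and vectors `v, w`. -/
def mdot {N : ℕ} (M : Matrix (Fin N) (Fin N) ℝ) (v w : Euc N) : ℝ :=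
  ∑ i, (∑ j, M i j * v j) * w i

/-- The truncation `T_k(s) = max(-k, min(s,k))`. -/
def Tk (k s : ℝ) : ℝ := max (-k) (min s k)

/-- `G_k(s) = (|s|-k)⁺ sign s`. -/
def Gk (k s : ℝ) : ℝ := Real.sign s * max (|s| - k) 0

/-- An open set with smooth boundary, described by a smooth defining function. -/
def HasSmoothBoundary {N : ℕ} (Ω : Set (Euc N)) : Prop :=
  ∃ ρ : Euc N → ℝ, ContDiff ℝ (⊤ : ℕ∞) ρ ∧ Ω = {x | ρ x < 0} ∧
    frontier Ω = {x | ρ x = 0} ∧ ∀ x ∈ frontier Ω, gradient ρ x ≠ 0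

/-- The Laplacian `Δu = ∑ i, ∂²u/∂xᵢ²`. -/
def lap {N : ℕ} (u : Euc N → ℝ) (x : Euc N) : ℝ :=
  ∑ i, fderiv ℝ (fun y => fderiv ℝ u y (EuclideanSpace.single i (1:ℝ))) x
      (EuclideanSpace.single i (1:ℝ))

/-- (Abounded): measurable, elliptic and bounded matrix field on `Ω`. -/
def ABounded {N : ℕ} (Ω : Set (Euc N)) (A : Euc N → Matrix (Fin N) (Fin N) ℝ)
    (α β : ℝ) : Prop :=
  (∀ i j, Measurable fun x => A x i j) ∧ 0 < α ∧ 0 < β ∧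
  ∀ᵐ x ∂(volume.restrict Ω),
    (∀ ξ : Euc N, α * ‖ξ‖ ^ 2 ≤ mdot (A x) ξ ξ) ∧ ∀ i j, |A x i j| ≤ β

/-- (lip): Lipschitz, elliptic and bounded matrix field on `Ω`. -/
def ALip {N : ℕ} (Ω : Set (Euc N)) (A : Euc N → Matrix (Fin N) (Fin N) ℝ)
    (α β : ℝ) : Prop :=
  (∃ L : ℝ≥0, ∀ i j, LipschitzOnWith L (fun x => A x i j) (closure Ω)) ∧ 0 < α ∧ 0 < β ∧
  ∀ x ∈ Ω, (∀ ξ : Euc N, α * ‖ξ‖ ^ 2 ≤ mdot (A x) ξ ξ) ∧ ∀ i j, |A x i j| ≤ β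

/-- The `p`-capacity of a set `E ⊆ Ω`. -/
def capp {N : ℕ} (p : ℝ) (Ω E : Set (Euc N)) : ℝ≥0∞ :=
  ⨅ (A : Set (Euc N)) (_ : IsOpen A ∧ E ⊆ A ∧ A ⊆ Ω),
    ⨆ (K : Set (Euc N)) (_ : IsCompact K ∧ K ⊆ A),
      ⨅ (φ : Euc N → ℝ) (_ : IsTest Ω φ ∧ ∀ x ∈ K, 1 ≤ φ x),
        ∫⁻ x in Ω, (‖gradient φ x‖₊ : ℝ≥0∞) ^ p


section AuxLemmas

lemma euc_abs_le {N : ℕ} (a : Euc N) (i : Fin N) : |a i| ≤ ‖a‖ := by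
  rw [EuclideanSpace.norm_eq]
  have h1 : |a i| = Real.sqrt (‖a i‖ ^ 2) := by
    rw [Real.sqrt_sq_eq_abs]; simp
  rw [h1]
  exact Real.sqrt_le_sqrt (Finset.single_le_sum (fun j _ => sq_nonneg ‖a j‖) (Finset.mem_univ i))

lemma mdot_abs_le {N : ℕ} {M : Matrix (Fin N) (Fin N) ℝ} {β : ℝ} (hβ : 0 ≤ β)
    (hM : ∀ i j, |M i j| ≤ β) (a b : Euc N) :
    |mdot M a b| ≤ β * (N : ℝ) ^ 2 * (‖a‖ * ‖b‖) := by
  have key : |mdot M a b| ≤ ∑ i : Fin N, ∑ j : Fin N, β * ‖a‖ * ‖b‖ := by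
    refine (Finset.abs_sum_le_sum_abs _ _).trans ?_
    refine Finset.sum_le_sum fun i _ => ?_
    rw [abs_mul, ← Finset.sum_mul]
    calc |∑ j, M i j * a j| * |b i|
        ≤ (∑ j, |M i j * a j|) * |b i| := by
          apply mul_le_mul_of_nonneg_right (Finset.abs_sum_le_sum_abs _ _) (abs_nonneg _)
      _ ≤ (∑ j : Fin N, β * ‖a‖) * ‖b‖ := by
          apply mul_le_mul
          · refine Finset.sum_le_sum fun j _ => ?_
            rw [abs_mul]
            exact mul_le_mul (hM i j) (euc_abs_le a j) (abs_nonneg _) hβ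
          · exact euc_abs_le b i
          · exact abs_nonneg _
          · positivity
  calc |mdot M a b| ≤ ∑ i : Fin N, ∑ j : Fin N, β * ‖a‖ * ‖b‖ := key
    _ = β * (N : ℝ) ^ 2 * (‖a‖ * ‖b‖) := by simp [Finset.sum_const]; ring

lemma mdot_sub_right {N : ℕ} (M : Matrix (Fin N) (Fin N) ℝ) (a b c : Euc N) :
    mdot M a (b - c) = mdot M a b - mdot M a c := by
  simp only [mdot, ← Finset.sum_sub_distrib]
  congr 1; ext i
  have : (b - c) i = b i - c i := rfl
  rw [this]; ring

lemma hasGradientAt_comp' {N : ℕ} {φ : Euc N → ℝ} {G : Euc N} {F : ℝ → ℝ} {c : ℝ} {x : Euc N}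
    (hφ : HasGradientAt φ G x) (hF : HasDerivAt F c (φ x)) :
    HasGradientAt (fun y => F (φ y)) (c • G) x := by
  have h1 : HasFDerivAt φ ((InnerProductSpace.toDual ℝ (Euc N)) G) x := hφ.hasFDerivAt
  have h2 := hF.hasFDerivAt.comp x h1
  have h3 : (ContinuousLinearMap.smulRight (1 : ℝ →L[ℝ] ℝ) c).comp
      ((InnerProductSpace.toDual ℝ (Euc N)) G)
      = (InnerProductSpace.toDual ℝ (Euc N)) (c • G) := by
    ext y
    simp [real_inner_smul_left, mul_comm, Finset.mul_sum]
  rw [hasGradientAt_iff_hasFDerivAt, ← h3]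
  exact h2

lemma gradient_sub' {N : ℕ} {φ ψ : Euc N → ℝ} {x : Euc N}
    (hφ : DifferentiableAt ℝ φ x) (hψ : DifferentiableAt ℝ ψ x) :
    gradient (fun y => φ y - ψ y) x = gradient φ x - gradient ψ x := by
  unfold gradient
  rw [fderiv_fun_sub hφ hψ, map_sub]

def sqe (ε t : ℝ) : ℝ := Real.sqrt (t ^ 2 + ε ^ 2) - ε

lemma sqe_hasDerivAt {ε : ℝ} (hε : 0 < ε) (t : ℝ) :
    HasDerivAt (sqe ε) (t / Real.sqrt (t ^ 2 + ε ^ 2)) t := by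
  have hpos : (0:ℝ) < t ^ 2 + ε ^ 2 := by positivity
  have h1 : HasDerivAt (fun s : ℝ => s ^ 2 + ε ^ 2) (2 * t) t := by
    simpa using (hasDerivAt_pow 2 t).add_const (ε ^ 2)
  have h2 := (Real.hasDerivAt_sqrt hpos.ne').comp t h1
  have h3 := h2.sub_const ε
  refine h3.congr_deriv ?_
  have hs : Real.sqrt (t ^ 2 + ε ^ 2) ≠ 0 := by positivity
  field_simp

lemma sqe_deriv_abs_le {ε : ℝ} (t : ℝ) :
    |t / Real.sqrt (t ^ 2 + ε ^ 2)| ≤ 1 := by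
  have h1 : |t| ≤ Real.sqrt (t ^ 2 + ε ^ 2) := by
    rw [← Real.sqrt_sq_eq_abs]
    exact Real.sqrt_le_sqrt (by nlinarith [sq_nonneg ε])
  rw [abs_div, abs_of_nonneg (Real.sqrt_nonneg _)]
  exact div_le_one_of_le₀ h1 (Real.sqrt_nonneg _)

lemma sqe_nonneg {ε : ℝ} (hε : 0 < ε) (t : ℝ) : 0 ≤ sqe ε t := by
  have : Real.sqrt (ε ^ 2) ≤ Real.sqrt (t ^ 2 + ε ^ 2) := Real.sqrt_le_sqrt (by nlinarith)
  rw [Real.sqrt_sq hε.le] at this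
  simp only [sqe]; linarith

lemma sqe_le_abs {ε : ℝ} (hε : 0 < ε) (t : ℝ) : sqe ε t ≤ |t| := by
  have h1 : Real.sqrt (t ^ 2 + ε ^ 2) ≤ |t| + ε := by
    have : Real.sqrt (t ^ 2 + ε ^ 2) ≤ Real.sqrt ((|t| + ε) ^ 2) :=
      Real.sqrt_le_sqrt (by nlinarith [abs_nonneg t, sq_abs t])
    rwa [Real.sqrt_sq (by positivity)] at this
  simp only [sqe]; linarith

lemma sqe_zero {ε : ℝ} (hε : 0 < ε) : sqe ε 0 = 0 := by
  simp [sqe, Real.sqrt_sq hε.le]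

lemma sqe_contDiff {ε : ℝ} (hε : 0 < ε) : ContDiff ℝ 1 (sqe ε) := by
  have : ContDiff ℝ 1 (fun t : ℝ => Real.sqrt (t ^ 2 + ε ^ 2)) := by
    rw [contDiff_iff_contDiffAt]
    intro t
    have hpos : (0:ℝ) < t ^ 2 + ε ^ 2 := by positivity
    exact (Real.contDiffAt_sqrt hpos.ne').comp t
      ((contDiff_id.pow 2).add contDiff_const).contDiffAt
  exact this.sub contDiff_const

lemma sqe_tendsto (t : ℝ) :
    Tendsto (fun m : ℕ => sqe (1 / (m + 1)) t) atTop (𝓝 |t|) := by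
  have h1 : Tendsto (fun m : ℕ => (1:ℝ) / (m + 1)) atTop (𝓝 0) :=
    tendsto_one_div_add_atTop_nhds_zero_nat
  have h2 : Continuous (fun ε : ℝ => Real.sqrt (t ^ 2 + ε ^ 2) - ε) := by
    exact (Real.continuous_sqrt.comp (by continuity)).sub continuous_id
  have := (h2.tendsto 0).comp h1
  rw [show |t| = Real.sqrt (t ^ 2 + 0 ^ 2) - 0 by simp [Real.sqrt_sq_eq_abs]]
  exact this

lemma tsupport_sub_subset {N : ℕ} (φ ψ : Euc N → ℝ) :
    tsupport (fun x => φ x - ψ x) ⊆ tsupport φ ∪ tsupport ψ := by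
  apply closure_minimal _ ((isClosed_tsupport φ).union (isClosed_tsupport ψ))
  intro x hx
  by_contra hc
  simp only [mem_union, not_or] at hc
  have h1 : φ x = 0 := image_eq_zero_of_notMem_tsupport hc.1
  have h2 : ψ x = 0 := image_eq_zero_of_notMem_tsupport hc.2
  simp only [Function.mem_support, h1, h2, sub_zero, ne_eq, not_true_eq_false] at hx

lemma isTest_sub {N : ℕ} {Ω : Set (Euc N)} {φ ψ : Euc N → ℝ}
    (hφ : IsTest Ω φ) (hψ : IsTest Ω ψ) : IsTest Ω (fun x => φ x - ψ x) := by
  refine ⟨hφ.1.sub hψ.1, ?_, ?_⟩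
  · exact IsCompact.of_isClosed_subset (hφ.2.1.union hψ.2.1) (isClosed_tsupport _)
      (tsupport_sub_subset φ ψ)
  · exact (tsupport_sub_subset φ ψ).trans (union_subset hφ.2.2 hψ.2.2)

lemma gradient_continuous' {N : ℕ} {φ : Euc N → ℝ} (hφ : ContDiff ℝ 1 φ) :
    Continuous (gradient φ) := by
  have h1 : Continuous (fderiv ℝ φ) := hφ.continuous_fderiv one_ne_zero
  exact ((InnerProductSpace.toDual ℝ (Euc N)).symm.continuous).comp h1

lemma gradient_hasCompactSupport' {N : ℕ} {φ : Euc N → ℝ} (hφ : HasCompactSupport φ) :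
    HasCompactSupport (gradient φ) := by
  have h1 := hφ.fderiv (𝕜 := ℝ)
  exact h1.comp_left (g := (InnerProductSpace.toDual ℝ (Euc N)).symm) (map_zero _)

end AuxLemmas


lemma ennreal_mul_liminf_le {c b : ℝ≥0∞} {bk : ℕ → ℝ≥0∞}
    (hbk : Filter.Tendsto bk Filter.atTop (𝓝 b)) :
    c * b ≤ Filter.liminf (fun k => c * bk k) Filter.atTop := by
  by_cases hc : c = ⊤
  · by_cases hb : b = 0
    · simp [hb]
    · have hev : ∀ᶠ k in Filter.atTop, c * bk k = ⊤ := by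
        filter_upwards [hbk.eventually_ne hb] with k hk
        rw [hc, ENNReal.top_mul hk]
      rw [Filter.liminf_congr hev, Filter.liminf_const]
      exact le_top
  · rw [(ENNReal.Tendsto.const_mul hbk (Or.inr hc)).liminf_eq]

/-- **Extension of the class of test functions for finite-energy solutions**
(Lemma `lemextest`): a weak (finite energy) distributional solution of
`-div(A∇u) = h(u) f` may be tested with any `v ∈ H¹₀(Ω)`; in particular `h(u) f v ∈ L¹(Ω)`. -/
theorem extension_of_test_functions {N : ℕ} (hN : 2 ≤ N)
    (Ω : Set (Euc N)) (hΩo : IsOpen Ω) (hΩb : Bornology.IsBounded Ω)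
    (A : Euc N → Matrix (Fin N) (Fin N) ℝ) (α β : ℝ) (hA : ABounded Ω A α β)
    (f : Euc N → ℝ) (hfInt : Integrable f (volume.restrict Ω))
    (hf0 : 0 ≤ᵐ[volume.restrict Ω] f)
    (h : ℝ → ℝ≥0∞) (hcont : ContinuousOn h (Ici 0)) (hfin : ∀ s : ℝ, 0 < s → h s ≠ ⊤)
    (u : Euc N → ℝ) (g : Euc N → Euc N)
    (hu0 : 0 ≤ᵐ[volume.restrict Ω] u)
    (huW : MemW1p0 2 Ω u g) (huG : HasWeakGradOn u g Ω)
    (hloc : ∀ K ⊆ Ω, IsCompact K → ∫⁻ x in K, h (u x) * ENNReal.ofReal (f x) < ⊤)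
    (heq : ∀ φ : Euc N → ℝ, IsTestC1 Ω φ →
      ∫ x in Ω, mdot (A x) (g x) (gradient φ x)
        = ∫ x in Ω, (h (u x)).toReal * f x * φ x) :
    ∀ v gv, MemW1p0 2 Ω v gv →
      (∫⁻ x in Ω, h (u x) * ENNReal.ofReal (f x) * (‖v x‖₊ : ℝ≥0∞) < ⊤) ∧
      Integrable (fun x => (h (u x)).toReal * f x * v x) (volume.restrict Ω) ∧
      ∫ x in Ω, mdot (A x) (g x) (gv x) = ∫ x in Ω, (h (u x)).toReal * f x * v x := by
  classical
  intro v gv hv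
  have hμfin : (volume : Measure (Euc N)) Ω < ⊤ := hΩb.measure_lt_top
  haveI : Fact ((volume : Measure (Euc N)) Ω < ⊤) := ⟨hμfin⟩
  set μ := (volume : Measure (Euc N)).restrict Ω with hμdef
  obtain ⟨hAmeas, hα, hβ, hAae⟩ := hA
  obtain ⟨huL2, hgL2, -⟩ := huW
  have hβN : (0:ℝ) ≤ β * (N:ℝ) ^ 2 := by positivity
  set C : ℝ≥0∞ := ENNReal.ofReal (β * (N:ℝ) ^ 2) * eLpNorm g 2 μ with hCdef
  have hC_ne_top : C ≠ ⊤ := ENNReal.mul_ne_top ENNReal.ofReal_ne_top hgL2.eLpNorm_lt_top.ne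
  -- measurability material
  have hu_aem : AEMeasurable u μ := huL2.aestronglyMeasurable.aemeasurable
  have hf_aem : AEMeasurable f μ := hfInt.aestronglyMeasurable.aemeasurable
  have hfo_aem : AEMeasurable (fun x => ENNReal.ofReal (f x)) μ := hf_aem.ennreal_ofReal
  set H : ℝ → ℝ≥0∞ := fun s => h (max s 0) with hHdef
  have hHcont : Continuous H := by
    apply ContinuousOn.comp_continuous hcont (continuous_id.max continuous_const)
    intro x; exact mem_Ici.mpr (le_max_right _ _)
  have hHu : (fun x => h (u x)) =ᵐ[μ] fun x => H (u x) := by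
    filter_upwards [hu0] with x hx
    show h (u x) = h (u x ⊔ 0)
    have hx' : (0:ℝ) ≤ u x := hx
    rw [max_eq_left hx']
  have hhu_aem : AEMeasurable (fun x => h (u x)) μ :=
    (hHcont.measurable.comp_aemeasurable hu_aem).congr hHu.symm
  have hhuR_aem : AEMeasurable (fun x => (h (u x)).toReal) μ :=
    ENNReal.measurable_toReal.comp_aemeasurable hhu_aem
  have hhf_aem : AEMeasurable (fun x => h (u x) * ENNReal.ofReal (f x)) μ := hhu_aem.mul hfo_aem
  -- membership of compactly supported continuous functions in L²
  have memCSr : ∀ w : Euc N → ℝ, Continuous w → HasCompactSupport w → MemLp w 2 μ := by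
    intro w hc hs
    obtain ⟨Cw, hCw⟩ := hs.exists_bound_of_continuous hc
    exact MemLp.of_bound hc.aestronglyMeasurable Cw (Eventually.of_forall hCw)
  have memCSv : ∀ w : Euc N → Euc N, Continuous w → HasCompactSupport w → MemLp w 2 μ := by
    intro w hc hs
    obtain ⟨Cw, hCw⟩ := hs.exists_bound_of_continuous hc
    exact MemLp.of_bound hc.aestronglyMeasurable Cw (Eventually.of_forall hCw)
  have memGrad : ∀ φ : Euc N → ℝ, IsTestC1 Ω φ → MemLp (gradient φ) 2 μ := fun φ hφ =>
    memCSv _ (gradient_continuous' hφ.1) (gradient_hasCompactSupport' hφ.2.1)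
  -- Hölder inequality
  have holder : ∀ w : Euc N → Euc N, AEMeasurable (fun x => (‖w x‖₊ : ℝ≥0∞)) μ →
      ∫⁻ x, (‖g x‖₊ : ℝ≥0∞) * ‖w x‖₊ ∂μ ≤ eLpNorm g 2 μ * eLpNorm w 2 μ := by
    intro w hw
    have hpq : Real.HolderConjugate 2 2 := Real.HolderConjugate.two_two
    have hg' : AEMeasurable (fun x => (‖g x‖₊ : ℝ≥0∞)) μ := hgL2.aestronglyMeasurable.enorm
    have h2 := ENNReal.lintegral_mul_le_Lp_mul_Lq μ hpq hg' hw
    rw [eLpNorm_eq_lintegral_rpow_enorm_toReal (by norm_num) (by norm_num),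
        eLpNorm_eq_lintegral_rpow_enorm_toReal (by norm_num) (by norm_num)]
    simpa [ENNReal.toReal_ofNat, enorm_eq_nnnorm] using h2
  -- the basic bilinear-form estimates
  have hAbd : ∀ᵐ x ∂μ, ∀ i j, |A x i j| ≤ β := hAae.mono fun x hx => hx.2
  have mdot_meas : ∀ w : Euc N → Euc N, AEMeasurable w μ →
      AEMeasurable (fun x => mdot (A x) (g x) (w x)) μ := by
    intro w hw
    have hg' : AEMeasurable g μ := hgL2.aestronglyMeasurable.aemeasurable
    have hcomp : ∀ (q : Euc N → Euc N), AEMeasurable q μ → ∀ j : Fin N,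
        AEMeasurable (fun x => q x j) μ := by
      intro q hq j
      exact (EuclideanSpace.proj (𝕜 := ℝ) j).continuous.measurable.comp_aemeasurable hq
    unfold mdot
    apply Finset.aemeasurable_fun_sum
    intro i _
    apply AEMeasurable.mul _ (hcomp w hw i)
    apply Finset.aemeasurable_fun_sum
    intro j _
    exact (hAmeas i j).aemeasurable.mul (hcomp g hg' j)
  have hgw_int : ∀ w : Euc N → Euc N, MemLp w 2 μ →
      Integrable (fun x => ‖g x‖ * ‖w x‖) μ := by
    intro w hw
    refine ⟨hgL2.aestronglyMeasurable.norm.mul hw.aestronglyMeasurable.norm, ?_⟩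
    show (∫⁻ x, (‖‖g x‖ * ‖w x‖‖₊ : ℝ≥0∞) ∂μ) < ⊤
    have heqp : ∀ x, (‖‖g x‖ * ‖w x‖‖₊ : ℝ≥0∞) = (‖g x‖₊ : ℝ≥0∞) * ‖w x‖₊ := by
      intro x
      rw [nnnorm_mul, nnnorm_norm, nnnorm_norm, ENNReal.coe_mul]
    calc ∫⁻ x, (‖‖g x‖ * ‖w x‖‖₊ : ℝ≥0∞) ∂μ = ∫⁻ x, (‖g x‖₊ : ℝ≥0∞) * ‖w x‖₊ ∂μ :=
        lintegral_congr heqp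
      _ ≤ eLpNorm g 2 μ * eLpNorm w 2 μ := holder w hw.aestronglyMeasurable.enorm
      _ < ⊤ := ENNReal.mul_lt_top hgL2.eLpNorm_lt_top hw.eLpNorm_lt_top
  have mdot_general : ∀ w : Euc N → Euc N, MemLp w 2 μ →
      Integrable (fun x => mdot (A x) (g x) (w x)) μ ∧
      ENNReal.ofReal |∫ x, mdot (A x) (g x) (w x) ∂μ| ≤ C * eLpNorm w 2 μ := by
    intro w hw
    have hwaem : AEMeasurable w μ := hw.aestronglyMeasurable.aemeasurable
    have hmm := mdot_meas w hwaem
    have hbd : ∀ᵐ x ∂μ, |mdot (A x) (g x) (w x)| ≤ β * (N:ℝ)^2 * (‖g x‖ * ‖w x‖) :=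
      hAbd.mono fun x hx => mdot_abs_le hβ.le hx _ _
    have hgw := hgw_int w hw
    have hInt : Integrable (fun x => mdot (A x) (g x) (w x)) μ := by
      apply Integrable.mono' (hgw.const_mul (β * (N:ℝ)^2))
        (aestronglyMeasurable_iff_aemeasurable.mpr hmm)
      filter_upwards [hbd] with x hx
      simpa [Real.norm_eq_abs] using hx
    refine ⟨hInt, ?_⟩
    have h1 : |∫ x, mdot (A x) (g x) (w x) ∂μ| ≤ ∫ x, β*(N:ℝ)^2 * (‖g x‖ * ‖w x‖) ∂μ := by
      rw [← Real.norm_eq_abs]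
      refine (norm_integral_le_integral_norm _).trans ?_
      refine integral_mono_ae hInt.norm (hgw.const_mul _) ?_
      filter_upwards [hbd] with x hx
      simpa [Real.norm_eq_abs] using hx
    have h2 : ENNReal.ofReal (∫ x, β*(N:ℝ)^2 * (‖g x‖*‖w x‖) ∂μ) ≤ C * eLpNorm w 2 μ := by
      rw [integral_const_mul, ENNReal.ofReal_mul hβN]
      have h3 : ENNReal.ofReal (∫ x, ‖g x‖ * ‖w x‖ ∂μ) = ∫⁻ x, (‖g x‖₊ : ℝ≥0∞) * ‖w x‖₊ ∂μ := by
        rw [ofReal_integral_eq_lintegral_ofReal hgw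
          (Eventually.of_forall fun x => by positivity)]
        apply lintegral_congr
        intro x
        rw [ENNReal.ofReal_mul (norm_nonneg _), ofReal_norm_eq_enorm,
          ofReal_norm_eq_enorm, enorm_eq_nnnorm, enorm_eq_nnnorm]
      rw [h3, hCdef, mul_assoc]
      exact mul_le_mul_right (holder w hw.aestronglyMeasurable.enorm) _
    exact (ENNReal.ofReal_le_ofReal h1).trans h2
  -- pointwise comparison
  have ptwise : ∀ w : Euc N → ℝ, ∀ᵐ x ∂μ,
      (‖(h (u x)).toReal * f x * w x‖₊ : ℝ≥0∞) ≤ h (u x) * ENNReal.ofReal (f x) * ‖w x‖₊ := by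
    intro w
    filter_upwards [hf0] with x hfx
    by_cases hx : h (u x) = ⊤
    · simp [hx]
    · simp only [← enorm_eq_nnnorm]
      rw [Real.enorm_eq_ofReal_abs, abs_mul, abs_mul,
        abs_of_nonneg ENNReal.toReal_nonneg, abs_of_nonneg hfx,
        ENNReal.ofReal_mul (mul_nonneg ENNReal.toReal_nonneg hfx),
        ENNReal.ofReal_mul ENNReal.toReal_nonneg,
        ENNReal.ofReal_toReal hx, ← Real.enorm_eq_ofReal_abs]
  -- finiteness on test functions
  have finTest : ∀ φ : Euc N → ℝ, IsTestC1 Ω φ →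
      ∫⁻ x, h (u x) * ENNReal.ofReal (f x) * ‖φ x‖₊ ∂μ < ⊤ := by
    intro φ hφ
    have hKc : IsCompact (tsupport φ) := hφ.2.1
    have hKΩ : tsupport φ ⊆ Ω := hφ.2.2
    have hKm : MeasurableSet (tsupport φ) := (isClosed_tsupport φ).measurableSet
    obtain ⟨Mφ, hMφ⟩ := hφ.2.1.exists_bound_of_continuous hφ.1.continuous
    have hbd : ∀ x, h (u x) * ENNReal.ofReal (f x) * ‖φ x‖₊ ≤
        (tsupport φ).indicator
          (fun y => ENNReal.ofReal Mφ * (h (u y) * ENNReal.ofReal (f y))) x := by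
      intro x
      by_cases hx : x ∈ tsupport φ
      · rw [indicator_of_mem hx, mul_comm (ENNReal.ofReal Mφ)]
        apply mul_le_mul_right
        rw [← enorm_eq_nnnorm, ← ofReal_norm_eq_enorm]
        exact ENNReal.ofReal_le_ofReal (hMφ x)
      · rw [indicator_of_notMem hx]
        have hz : φ x = 0 := image_eq_zero_of_notMem_tsupport hx
        simp [hz]
    calc ∫⁻ x, h (u x) * ENNReal.ofReal (f x) * ‖φ x‖₊ ∂μ
        ≤ ∫⁻ x, (tsupport φ).indicator
            (fun y => ENNReal.ofReal Mφ * (h (u y) * ENNReal.ofReal (f y))) x ∂μ :=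
          lintegral_mono hbd
      _ = ∫⁻ x in tsupport φ, ENNReal.ofReal Mφ * (h (u x) * ENNReal.ofReal (f x)) ∂μ := by
          rw [lintegral_indicator hKm]
      _ = ∫⁻ x in tsupport φ, ENNReal.ofReal Mφ * (h (u x) * ENNReal.ofReal (f x)) ∂volume := by
          rw [hμdef, Measure.restrict_restrict hKm, inter_eq_self_of_subset_left hKΩ]
      _ = ENNReal.ofReal Mφ * ∫⁻ x in tsupport φ, h (u x) * ENNReal.ofReal (f x) ∂volume :=
          lintegral_const_mul' _ _ ENNReal.ofReal_ne_top
      _ < ⊤ := ENNReal.mul_lt_top ENNReal.ofReal_lt_top (hloc _ hKΩ hKc)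
  -- integrability criterion
  have intOf : ∀ w : Euc N → ℝ, AEMeasurable w μ →
      (∫⁻ x, h (u x) * ENNReal.ofReal (f x) * ‖w x‖₊ ∂μ) < ⊤ →
      Integrable (fun x => (h (u x)).toReal * f x * w x) μ := by
    intro w hwm hfin'
    refine ⟨aestronglyMeasurable_iff_aemeasurable.mpr ((hhuR_aem.mul hf_aem).mul hwm), ?_⟩
    exact lt_of_le_of_lt (lintegral_mono_ae (ptwise w)) hfin'
  -- the key estimate for smooth test functions
  have est : ∀ φ : Euc N → ℝ, IsTest Ω φ →
      ∫⁻ x, h (u x) * ENNReal.ofReal (f x) * ‖φ x‖₊ ∂μ ≤ C * eLpNorm (gradient φ) 2 μ := by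
    intro φ hφ
    have hφ1 : ContDiff ℝ 1 φ := hφ.1.of_le (by simp)
    have hφd : Differentiable ℝ φ := hφ1.differentiable one_ne_zero
    set ψ : ℕ → Euc N → ℝ := fun m x => sqe (1/(m+1)) (φ x) with hψdef
    have hε : ∀ m : ℕ, (0:ℝ) < 1/(m+1) := fun m => by positivity
    have hψc1 : ∀ m, ContDiff ℝ 1 (ψ m) := fun m => (sqe_contDiff (hε m)).comp hφ1
    have hψsupp : ∀ m, tsupport (ψ m) ⊆ tsupport φ := by
      intro m
      apply closure_minimal _ (isClosed_tsupport φ)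
      intro x hx
      by_contra hc
      have h0 : φ x = 0 := image_eq_zero_of_notMem_tsupport hc
      have hz : ψ m x = 0 := by
        show sqe (1/(m+1)) (φ x) = 0
        rw [h0, sqe_zero (hε m)]
      exact hx hz
    have hψcs : ∀ m, HasCompactSupport (ψ m) := fun m =>
      IsCompact.of_isClosed_subset hφ.2.1 (isClosed_tsupport _) (hψsupp m)
    have hψtest : ∀ m, IsTestC1 Ω (ψ m) := fun m =>
      ⟨hψc1 m, hψcs m, (hψsupp m).trans hφ.2.2⟩
    have hψgrad : ∀ m x, gradient (ψ m) x
        = (φ x / Real.sqrt (φ x ^ 2 + (1/(m+1):ℝ) ^ 2)) • gradient φ x := by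
      intro m x
      have h1 : HasGradientAt φ (gradient φ x) x := (hφd x).hasGradientAt
      exact (hasGradientAt_comp' h1 (sqe_hasDerivAt (hε m) (φ x))).gradient
    have hψgn : ∀ m x, ‖gradient (ψ m) x‖ ≤ ‖gradient φ x‖ := by
      intro m x
      rw [hψgrad m x, norm_smul]
      apply mul_le_of_le_one_left (norm_nonneg _)
      rw [Real.norm_eq_abs]
      exact sqe_deriv_abs_le _
    have key : ∀ m, ∫⁻ x, h (u x) * ENNReal.ofReal (f x) * ENNReal.ofReal (ψ m x) ∂μ
        ≤ C * eLpNorm (gradient φ) 2 μ := by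
      intro m
      have hψint : Integrable (fun x => (h (u x)).toReal * f x * ψ m x) μ :=
        intOf _ (hψc1 m).continuous.measurable.aemeasurable (finTest _ (hψtest m))
      have hψ0 : ∀ x, 0 ≤ ψ m x := fun x => sqe_nonneg (hε m) (φ x)
      have hKfin : ∀ᵐ x ∂μ, x ∈ tsupport (ψ m) → h (u x) * ENNReal.ofReal (f x) < ⊤ := by
        have hKm : MeasurableSet (tsupport (ψ m)) := (isClosed_tsupport _).measurableSet
        have hKΩ : tsupport (ψ m) ⊆ Ω := (hψtest m).2.2
        have h1 : ∀ᵐ x ∂(μ.restrict (tsupport (ψ m))),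
            h (u x) * ENNReal.ofReal (f x) < ⊤ := by
          apply ae_lt_top' hhf_aem.restrict
          rw [hμdef, Measure.restrict_restrict hKm, inter_eq_self_of_subset_left hKΩ]
          exact (hloc _ hKΩ (hψcs m)).ne
        exact ae_imp_of_ae_restrict h1
      have aeeq : (fun x => h (u x) * ENNReal.ofReal (f x) * ENNReal.ofReal (ψ m x))
          =ᵐ[μ] fun x => ENNReal.ofReal ((h (u x)).toReal * f x * ψ m x) := by
        filter_upwards [hf0, hKfin] with x hfx hKx
        by_cases hxK : x ∈ tsupport (ψ m)
        · by_cases hx : h (u x) = ⊤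
          · have hlt := hKx hxK
            rw [hx] at hlt
            have hfx0 : ENNReal.ofReal (f x) = 0 := by
              by_contra hne
              rw [ENNReal.top_mul hne] at hlt
              exact absurd hlt (lt_irrefl ⊤)
            have hfz : f x = 0 := le_antisymm (ENNReal.ofReal_eq_zero.mp hfx0) hfx
            simp [hx, hfx0, hfz]
          · rw [ENNReal.ofReal_mul (mul_nonneg ENNReal.toReal_nonneg hfx),
              ENNReal.ofReal_mul ENNReal.toReal_nonneg, ENNReal.ofReal_toReal hx]
        · have h0 : ψ m x = 0 := image_eq_zero_of_notMem_tsupport hxK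
          simp [h0]
      have hψ0' : (0 : Euc N → ℝ) ≤ᵐ[μ] fun x => (h (u x)).toReal * f x * ψ m x := by
        filter_upwards [hf0] with x hfx
        exact mul_nonneg (mul_nonneg ENNReal.toReal_nonneg hfx) (hψ0 x)
      rw [lintegral_congr_ae aeeq, ← ofReal_integral_eq_lintegral_ofReal hψint hψ0',
        ← heq (ψ m) (hψtest m)]
      have hgm := mdot_general (gradient (ψ m)) (memGrad _ (hψtest m))
      refine ((ENNReal.ofReal_le_ofReal (le_abs_self _)).trans hgm.2).trans ?_
      exact mul_le_mul_right (eLpNorm_mono fun x => hψgn m x) _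
    have hlim : ∀ x, Tendsto (fun m => ENNReal.ofReal (ψ m x)) atTop (𝓝 ((‖φ x‖₊ : ℝ≥0∞))) := by
      intro x
      have h1 := sqe_tendsto (φ x)
      have h2 : Tendsto (fun m : ℕ => ENNReal.ofReal (ψ m x)) atTop
          (𝓝 (ENNReal.ofReal |φ x|)) := (ENNReal.continuous_ofReal.tendsto _).comp h1
      rwa [← Real.enorm_eq_ofReal_abs] at h2
    have ptlim : ∀ x, h (u x) * ENNReal.ofReal (f x) * ‖φ x‖₊
        ≤ liminf (fun m => h (u x) * ENNReal.ofReal (f x) * ENNReal.ofReal (ψ m x)) atTop :=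
      fun x => ennreal_mul_liminf_le (hlim x)
    have hmk : ∀ m, AEMeasurable
        (fun x => h (u x) * ENNReal.ofReal (f x) * ENNReal.ofReal (ψ m x)) μ := fun m =>
      hhf_aem.mul ((hψc1 m).continuous.measurable.aemeasurable.ennreal_ofReal)
    calc ∫⁻ x, h (u x) * ENNReal.ofReal (f x) * ‖φ x‖₊ ∂μ
        ≤ ∫⁻ x, liminf
            (fun m => h (u x) * ENNReal.ofReal (f x) * ENNReal.ofReal (ψ m x)) atTop ∂μ :=
          lintegral_mono ptlim
      _ ≤ liminf (fun m => ∫⁻ x, h (u x) * ENNReal.ofReal (f x) * ENNReal.ofReal (ψ m x) ∂μ)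
            atTop := lintegral_liminf_le' hmk
      _ ≤ C * eLpNorm (gradient φ) 2 μ := by
          refine Filter.liminf_le_of_frequently_le (Filter.Frequently.of_forall key) ?_
          exact Filter.isBoundedUnder_of ⟨0, fun m => zero_le⟩
  -- the extended estimate for W^{1,2}_0 pairs
  have est2 : ∀ (w : Euc N → ℝ) (gw : Euc N → Euc N), MemW1p0 2 Ω w gw →
      ∫⁻ x, h (u x) * ENNReal.ofReal (f x) * ‖w x‖₊ ∂μ ≤ C * eLpNorm gw 2 μ := by
    intro w gw hw
    obtain ⟨hwL2, hgwL2, ψs, hψs, hψconv, hgψconv⟩ := hw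
    have htim : TendstoInMeasure μ (fun n => ψs n) atTop w := by
      apply tendstoInMeasure_of_tendsto_eLpNorm (p := 2) (by norm_num)
        (fun n => (hψs n).1.continuous.aestronglyMeasurable) hwL2.aestronglyMeasurable
      exact hψconv
    obtain ⟨ns, hns, hae⟩ := htim.exists_seq_tendsto_ae
    have meask : ∀ k : ℕ,
        AEMeasurable (fun x => h (u x) * ENNReal.ofReal (f x) * ‖ψs (ns k) x‖₊) μ := fun k =>
      hhf_aem.mul ((hψs (ns k)).1.continuous.aestronglyMeasurable.enorm)
    have step1 : ∀ᵐ x ∂μ, h (u x) * ENNReal.ofReal (f x) * ‖w x‖₊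
        ≤ liminf (fun k => h (u x) * ENNReal.ofReal (f x) * ‖ψs (ns k) x‖₊) atTop := by
      filter_upwards [hae] with x hx
      apply ennreal_mul_liminf_le
      rw [ENNReal.tendsto_coe]
      exact (continuous_nnnorm.tendsto _).comp hx
    have step2 : liminf (fun k => C * eLpNorm (gradient (ψs (ns k))) 2 μ) atTop
        ≤ C * eLpNorm gw 2 μ := by
      have hd : Tendsto (fun k => eLpNorm (fun x => gradient (ψs (ns k)) x - gw x) 2 μ)
          atTop (𝓝 0) := hgψconv.comp hns.tendsto_atTop
      have htri : ∀ k, eLpNorm (gradient (ψs (ns k))) 2 μ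
          ≤ eLpNorm (fun x => gradient (ψs (ns k)) x - gw x) 2 μ + eLpNorm gw 2 μ := by
        intro k
        have hgc : Continuous (gradient (ψs (ns k))) :=
          gradient_continuous' ((hψs (ns k)).1.of_le (by simp))
        calc eLpNorm (gradient (ψs (ns k))) 2 μ
            = eLpNorm ((fun x => gradient (ψs (ns k)) x - gw x) + gw) 2 μ := by
              congr 1; funext x; simp
          _ ≤ _ := eLpNorm_add_le
              ((hgc.aestronglyMeasurable).sub hgwL2.aestronglyMeasurable)
              hgwL2.aestronglyMeasurable one_le_two
      have hlim2 : Tendsto (fun k => C * (eLpNorm (fun x => gradient (ψs (ns k)) x - gw x) 2 μ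
          + eLpNorm gw 2 μ)) atTop (𝓝 (C * (0 + eLpNorm gw 2 μ))) :=
        ENNReal.Tendsto.const_mul (hd.add tendsto_const_nhds) (Or.inr hC_ne_top)
      calc liminf (fun k => C * eLpNorm (gradient (ψs (ns k))) 2 μ) atTop
          ≤ liminf (fun k => C * (eLpNorm (fun x => gradient (ψs (ns k)) x - gw x) 2 μ
              + eLpNorm gw 2 μ)) atTop :=
            Filter.liminf_le_liminf (Eventually.of_forall fun k => mul_le_mul_right (htri k) _)
        _ = C * (0 + eLpNorm gw 2 μ) := hlim2.liminf_eq
        _ = C * eLpNorm gw 2 μ := by rw [zero_add]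
    calc ∫⁻ x, h (u x) * ENNReal.ofReal (f x) * ‖w x‖₊ ∂μ
        ≤ ∫⁻ x, liminf (fun k => h (u x) * ENNReal.ofReal (f x) * ‖ψs (ns k) x‖₊) atTop ∂μ :=
          lintegral_mono_ae step1
      _ ≤ liminf (fun k => ∫⁻ x, h (u x) * ENNReal.ofReal (f x) * ‖ψs (ns k) x‖₊ ∂μ) atTop :=
          lintegral_liminf_le' meask
      _ ≤ liminf (fun k => C * eLpNorm (gradient (ψs (ns k))) 2 μ) atTop :=
          Filter.liminf_le_liminf (Eventually.of_forall fun k => est _ (hψs (ns k)))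
      _ ≤ C * eLpNorm gw 2 μ := step2
  -- conclusion
  obtain ⟨hvL2, hgvL2, φs, hφs, hφconv, hgφconv⟩ := hv
  have hvW : MemW1p0 2 Ω v gv := ⟨hvL2, hgvL2, φs, hφs, hφconv, hgφconv⟩
  have claim1 : ∫⁻ x, h (u x) * ENNReal.ofReal (f x) * ‖v x‖₊ ∂μ < ⊤ :=
    (est2 v gv hvW).trans_lt
      (ENNReal.mul_lt_top hC_ne_top.lt_top hgvL2.eLpNorm_lt_top)
  have claim2 : Integrable (fun x => (h (u x)).toReal * f x * v x) μ :=
    intOf v hvL2.aestronglyMeasurable.aemeasurable claim1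
  refine ⟨claim1, claim2, ?_⟩
  have testC1 : ∀ n, IsTestC1 Ω (φs n) := fun n =>
    ⟨(hφs n).1.of_le (by simp), (hφs n).2.1, (hφs n).2.2⟩
  have memGradn : ∀ n, MemLp (gradient (φs n)) 2 μ := fun n => memGrad _ (testC1 n)
  have hwn : ∀ n, MemLp (fun x => gradient (φs n) x - gv x) 2 μ := fun n =>
    (memGradn n).sub hgvL2
  have hX : Tendsto (fun n => (C * eLpNorm (fun x => gradient (φs n) x - gv x) 2 μ).toReal)
      atTop (𝓝 0) := by
    have h1 : Tendsto (fun n => C * eLpNorm (fun x => gradient (φs n) x - gv x) 2 μ)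
        atTop (𝓝 (C * 0)) := ENNReal.Tendsto.const_mul hgφconv (Or.inr hC_ne_top)
    rw [mul_zero] at h1
    have h2 := (ENNReal.tendsto_toReal (a := 0) (by simp)).comp h1
    simpa only [Function.comp_def, ENNReal.toReal_zero] using h2
  have tendL : Tendsto (fun n => ∫ x, mdot (A x) (g x) (gradient (φs n) x) ∂μ) atTop
      (𝓝 (∫ x, mdot (A x) (g x) (gv x) ∂μ)) := by
    rw [← tendsto_sub_nhds_zero_iff]
    have hbd : ∀ n, |∫ x, mdot (A x) (g x) (gradient (φs n) x) ∂μ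
        - ∫ x, mdot (A x) (g x) (gv x) ∂μ|
        ≤ (C * eLpNorm (fun x => gradient (φs n) x - gv x) 2 μ).toReal := by
      intro n
      have h1 : ∫ x, mdot (A x) (g x) (gradient (φs n) x) ∂μ
          - ∫ x, mdot (A x) (g x) (gv x) ∂μ
          = ∫ x, mdot (A x) (g x) (gradient (φs n) x - gv x) ∂μ := by
        rw [← integral_sub (mdot_general _ (memGradn n)).1 (mdot_general _ hgvL2).1]
        exact integral_congr_ae (Eventually.of_forall fun x => (mdot_sub_right _ _ _ _).symm)
      rw [h1]
      have h2 := (mdot_general _ (hwn n)).2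
      have h3 : C * eLpNorm (fun x => gradient (φs n) x - gv x) 2 μ ≠ ⊤ :=
        ENNReal.mul_ne_top hC_ne_top (hwn n).eLpNorm_lt_top.ne
      have h4 := ENNReal.toReal_mono h3 h2
      rwa [ENNReal.toReal_ofReal (abs_nonneg _)] at h4
    exact squeeze_zero_norm (fun n => by simpa [Real.norm_eq_abs] using hbd n) hX
  have intn : ∀ n, Integrable (fun x => (h (u x)).toReal * f x * φs n x) μ := fun n =>
    intOf _ (hφs n).1.continuous.measurable.aemeasurable (finTest _ (testC1 n))
  have pairW : ∀ n, MemW1p0 2 Ω (fun x => φs n x - v x)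
      (fun x => gradient (φs n) x - gv x) := by
    intro n
    refine ⟨(memCSr _ (hφs n).1.continuous (hφs n).2.1).sub hvL2, hwn n,
      ⟨fun m x => φs n x - φs m x, fun m => isTest_sub (hφs n) (hφs m), ?_, ?_⟩⟩
    · have hcong : ∀ m, eLpNorm (fun x => (φs n x - φs m x) - (φs n x - v x)) 2 μ
          = eLpNorm (fun x => φs m x - v x) 2 μ := by
        intro m
        rw [show (fun x => (φs n x - φs m x) - (φs n x - v x))
          = fun x => -(φs m x - v x) by funext x; ring]
        exact eLpNorm_neg (f := fun x => φs m x - v x) (p := 2) (μ := μ)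
      exact hφconv.congr fun m => (hcong m).symm
    · have hcong : ∀ m, eLpNorm
          (fun x => gradient (fun y => φs n y - φs m y) x - (gradient (φs n) x - gv x)) 2 μ
          = eLpNorm (fun x => gradient (φs m) x - gv x) 2 μ := by
        intro m
        have hg1 : ∀ x, gradient (fun y => φs n y - φs m y) x
            = gradient (φs n) x - gradient (φs m) x := fun x =>
          gradient_sub' ((hφs n).1.differentiable (by simp) x)
            ((hφs m).1.differentiable (by simp) x)
        rw [show (fun x => gradient (fun y => φs n y - φs m y) x - (gradient (φs n) x - gv x))
          = fun x => -(gradient (φs m) x - gv x) by funext x; rw [hg1 x]; abel]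
        exact eLpNorm_neg (f := fun x => gradient (φs m) x - gv x) (p := 2) (μ := μ)
      exact hgφconv.congr fun m => (hcong m).symm
  have tendR : Tendsto (fun n => ∫ x, (h (u x)).toReal * f x * φs n x ∂μ) atTop
      (𝓝 (∫ x, (h (u x)).toReal * f x * v x ∂μ)) := by
    rw [← tendsto_sub_nhds_zero_iff]
    have hbd : ∀ n, |∫ x, (h (u x)).toReal * f x * φs n x ∂μ
        - ∫ x, (h (u x)).toReal * f x * v x ∂μ|
        ≤ (C * eLpNorm (fun x => gradient (φs n) x - gv x) 2 μ).toReal := by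
      intro n
      have h1 : ∫ x, (h (u x)).toReal * f x * φs n x ∂μ
          - ∫ x, (h (u x)).toReal * f x * v x ∂μ
          = ∫ x, (h (u x)).toReal * f x * (φs n x - v x) ∂μ := by
        rw [← integral_sub (intn n) claim2]
        exact integral_congr_ae (Eventually.of_forall fun x => by ring)
      rw [h1]
      have hsm : AEStronglyMeasurable (fun x => (h (u x)).toReal * f x * (φs n x - v x)) μ :=
        aestronglyMeasurable_iff_aemeasurable.mpr ((hhuR_aem.mul hf_aem).mul
          (((hφs n).1.continuous.measurable.aemeasurable).sub
            hvL2.aestronglyMeasurable.aemeasurable))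
      have h2 : |∫ x, (h (u x)).toReal * f x * (φs n x - v x) ∂μ|
          ≤ (∫⁻ x, (‖(h (u x)).toReal * f x * (φs n x - v x)‖₊ : ℝ≥0∞) ∂μ).toReal := by
        rw [← Real.norm_eq_abs]
        refine (norm_integral_le_integral_norm _).trans ?_
        rw [integral_norm_eq_lintegral_enorm hsm]
        exact le_rfl
      have h3 : (∫⁻ x, (‖(h (u x)).toReal * f x * (φs n x - v x)‖₊ : ℝ≥0∞) ∂μ)
          ≤ C * eLpNorm (fun x => gradient (φs n) x - gv x) 2 μ :=
        (lintegral_mono_ae (ptwise _)).trans (est2 _ _ (pairW n))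
      exact h2.trans (ENNReal.toReal_mono
        (ENNReal.mul_ne_top hC_ne_top (hwn n).eLpNorm_lt_top.ne) h3)
    exact squeeze_zero_norm (fun n => by simpa [Real.norm_eq_abs] using hbd n) hX
  have heqn : ∀ n, ∫ x, mdot (A x) (g x) (gradient (φs n) x) ∂μ
      = ∫ x, (h (u x)).toReal * f x * φs n x ∂μ := fun n => heq _ (testC1 n)
  have hfun : (fun n => ∫ x, mdot (A x) (g x) (gradient (φs n) x) ∂μ)
      = fun n => ∫ x, (h (u x)).toReal * f x * φs n x ∂μ := funext heqn
  rw [hfun] at tendL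
  exact tendsto_nhds_unique tendL tendR
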